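/- arXiv:1602.06131 — 3 statements merged into one kernel-verified Lean document; each statement's English description precedes it below -/
import Mathlib

section
/- For every H ∈ T⊥ one has ∑_{i=1}^{n} R₂(Xᵢ, H)Xᵢ = 3J(lH) = 3 j(lH) + 3 k(lH), where lH is the orthogonal projection of JH onto T, j(lH) is the orthogonal projection of J(lH) onto T, and k(lH) is the orthogonal projection of J(lH) onto T⊥. -/
/-!
Since `J` is skew-adjoint, `⟪J Xᵢ, Xᵢ⟫ = 0`, so the middle term of `R₂(Xᵢ, H)Xᵢ` drops out and
the other two combine to `3 ⟪Xᵢ, J H⟫ J Xᵢ`. Summing over the orthonormal basis of `T` and pulling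
`J` out gives `3 J` of the projection `l H` of `J H` onto `T`; the second identity is the splitting
`J (l H) = j (l H) + k (l H)` along `V = T ⊕ Tᗮ`.
-/

open RealInnerProductSpace Submodule Set

theorem Orthonormal.starProjection_span_eq_sum {𝕜 E ι : Type*} [RCLike 𝕜] [NormedAddCommGroup E]
    [InnerProductSpace 𝕜 E] [Fintype ι] {v : ι → E} (hv : Orthonormal 𝕜 v)
    [(span 𝕜 (range v)).HasOrthogonalProjection] (x : E) :
    (span 𝕜 (range v)).starProjection x = ∑ i, inner 𝕜 (v i) x • v i := by
  let e := Module.Basis.span hv.linearIndependent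
  let b : OrthonormalBasis ι 𝕜 (span 𝕜 (range v)) :=
    OrthonormalBasis.mk (v := e) (by convert! orthonormal_span hv; simp [e, Module.Basis.span_apply])
      e.span_eq.ge
  have hb (i : ι) : (b i : E) = v i := by simp [b, e, Module.Basis.span_apply]
  rw [starProjection_apply, b.orthogonalProjectionOnto_apply_eq_sum]
  simp [hb]

section ComplexCurvature

variable {V : Type*} [NormedAddCommGroup V] [InnerProductSpace ℝ V] (J : V →ₗ[ℝ] V)

theorem inner_apply_self_eq_zero_of_skew (hJ : ∀ x y : V, ⟪J x, y⟫ = -⟪x, J y⟫) (x : V) :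
    ⟪J x, x⟫ = 0 := by
  have := hJ x x
  rw [real_inner_comm (J x)] at this
  linarith

/-- The tensor `R₂` of a generalized complex space form. -/
def complexCurvature (A B C : V) : V :=
  ⟪J B, C⟫ • J A - ⟪J A, C⟫ • J B + (2 * ⟪J B, A⟫) • J C

variable {J}

theorem complexCurvature_self_right (hJ : ∀ x y : V, ⟪J x, y⟫ = -⟪x, J y⟫) (A B : V) :
    complexCurvature J A B A = (3 * ⟪A, J B⟫) • J A := by
  rw [complexCurvature, inner_apply_self_eq_zero_of_skew J hJ, zero_smul, sub_zero,
    real_inner_comm (J B), ← add_smul]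
  ring_nf

theorem sum_complexCurvature_self_right (hJ : ∀ x y : V, ⟪J x, y⟫ = -⟪x, J y⟫) {ι : Type*}
    [Fintype ι] (X : ι → V) (B : V) :
    ∑ i, complexCurvature J (X i) B (X i) = (3 : ℝ) • J (∑ i, ⟪X i, J B⟫ • X i) := by
  simp only [complexCurvature_self_right hJ, map_sum, map_smul, Finset.smul_sum, smul_smul]

end ComplexCurvature

theorem stmt_6_general
    {V : Type*} [NormedAddCommGroup V] [InnerProductSpace ℝ V] [FiniteDimensional ℝ V]
    (J : V →ₗ[ℝ] V)
    (hJskew : ∀ X Y : V, ⟪J X, Y⟫ = -⟪X, J Y⟫)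
    (T : Submodule ℝ V)
    (j k l : V → V)
    (hj : ∀ X : V, j X = (T.orthogonalProjectionOnto (J X) : V))
    (hk : ∀ X : V, k X = (Tᗮ.orthogonalProjectionOnto (J X) : V))
    (hl : ∀ ξ : V, l ξ = (T.orthogonalProjectionOnto (J ξ) : V))
    (n : ℕ) (X : Fin n → V)
    (hX : Orthonormal ℝ X)
    (hspan : Submodule.span ℝ (Set.range X) = T)
    (R₂ : V → V → V → V)
    (hR₂ : ∀ A B C : V, R₂ A B C = ⟪J B, C⟫ • J A - ⟪J A, C⟫ • J B + (2 * ⟪J B, A⟫) • J C)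
    : ∀ H ∈ Tᗮ,
      (∑ i, R₂ (X i) H (X i)) = (3 : ℝ) • J (l H) ∧
      (∑ i, R₂ (X i) H (X i)) = (3 : ℝ) • j (l H) + (3 : ℝ) • k (l H) := by
  intro H _
  subst hspan
  obtain rfl : R₂ = complexCurvature J := funext fun A ↦ funext fun B ↦ funext (hR₂ A B)
  have hsum : ∑ i, complexCurvature J (X i) H (X i) = (3 : ℝ) • J (l H) := by
    rw [sum_complexCurvature_self_right hJskew, hl, ← starProjection_apply,
      hX.starProjection_span_eq_sum]
  refine ⟨hsum, ?_⟩
  rw [hsum, hj, hk, ← smul_add, ← starProjection_apply, ← starProjection_apply,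
    starProjection_add_starProjection_orthogonal]

theorem stmt_6
    {V : Type*} [NormedAddCommGroup V] [InnerProductSpace ℝ V] [FiniteDimensional ℝ V]
    (J : V →ₗ[ℝ] V)
    (hJ2 : ∀ X : V, J (J X) = -X)
    (hJskew : ∀ X Y : V, ⟪J X, Y⟫ = -⟪X, J Y⟫)
    (T : Submodule ℝ V)
    (j k l m : V → V)
    (hj : ∀ X : V, j X = (T.orthogonalProjectionOnto (J X) : V))
    (hk : ∀ X : V, k X = (Tᗮ.orthogonalProjectionOnto (J X) : V))
    (hl : ∀ ξ : V, l ξ = (T.orthogonalProjectionOnto (J ξ) : V))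
    (hm : ∀ ξ : V, m ξ = (Tᗮ.orthogonalProjectionOnto (J ξ) : V))
    (n : ℕ) (X : Fin n → V)
    (hX : Orthonormal ℝ X)
    (hspan : Submodule.span ℝ (Set.range X) = T)
    (R₂ : V → V → V → V)
    (hR₂ : ∀ A B C : V, R₂ A B C = ⟪J B, C⟫ • J A - ⟪J A, C⟫ • J B + (2 * ⟪J B, A⟫) • J C)
    : ∀ H ∈ Tᗮ,
      (∑ i, R₂ (X i) H (X i)) = (3 : ℝ) • J (l H) ∧
      (∑ i, R₂ (X i) H (X i)) = (3 : ℝ) • j (l H) + (3 : ℝ) • k (l H) :=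
  stmt_6_general J hJskew T j k l hj hk hl n X hX hspan R₂ hR₂
end

section
/- Let α, β ∈ ℝ and define R = αR₁ + βR₂. Then for every H ∈ T⊥ one has ∑_{i=1}^{n} R(Xᵢ, H)Xᵢ = -nαH + 3β(j(lH) + k(lH)); in particular the component of this sum in T equals 3β j(lH) and the component in T⊥ equals -nαH + 3β k(lH). -/
/-!
For a unit vector `X ∈ T` and `H ∈ Tᗮ` the terms of `R(X, H) X` containing `⟪H, X⟫` or `⟪J X, X⟫`
vanish (the latter by skew-adjointness), leaving `-α H + 3β ⟪J H, X⟫ J X`. Summed over an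
orthonormal basis of `T`, the coefficients `⟪J H, Xᵢ⟫` reassemble the projection `l H` of `J H`
onto `T`, so the sum is `-nα H + 3β J (l H)`; splitting `J (l H) = j (l H) + k (l H)` along
`T ⊕ Tᗮ` gives both components.
-/

open RealInnerProductSpace

theorem Orthonormal.starProjection_eq_sum {𝕜 E ι : Type*} [RCLike 𝕜] [NormedAddCommGroup E]
    [InnerProductSpace 𝕜 E] [Fintype ι] {v : ι → E} (hv : Orthonormal 𝕜 v)
    {U : Submodule 𝕜 E} [U.HasOrthogonalProjection] (hU : Submodule.span 𝕜 (Set.range v) = U)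
    (x : E) : U.starProjection x = ∑ i, inner 𝕜 (v i) x • v i := by
  subst hU
  refine Submodule.eq_starProjection_of_mem_orthogonal
    (Submodule.sum_mem _ fun i _ ↦ Submodule.smul_mem _ _ (Submodule.subset_span ⟨i, rfl⟩)) ?_
  rw [Submodule.mem_orthogonal']
  intro u hu
  rw [← Submodule.mem_orthogonal_singleton_iff_inner_right]
  refine Submodule.span_le.mpr ?_ hu
  rintro _ ⟨i, rfl⟩
  rw [SetLike.mem_coe, Submodule.mem_orthogonal_singleton_iff_inner_left, inner_sub_right,
    hv.inner_right_fintype, sub_self]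

theorem inner_apply_self_eq_zero_of_skew_s7 {E : Type*} [NormedAddCommGroup E]
    [InnerProductSpace ℝ E] {J : E → E} (hJskew : ∀ x y, ⟪J x, y⟫ = -⟪x, J y⟫) (x : E) :
    ⟪J x, x⟫ = 0 := by
  have h := hJskew x x
  rw [real_inner_comm x (J x)] at h ⊢
  linarith

section ComplexSpaceForm

variable {V : Type*} [NormedAddCommGroup V] [InnerProductSpace ℝ V]

/-- The curvature tensor `α R₁ + β R₂` of the generalized complex space form `N(α, β)`. -/
def complexSpaceFormCurvature (J : V → V) (α β : ℝ) (A B C : V) : V :=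
  α • (⟪B, C⟫ • A - ⟪A, C⟫ • B) +
    β • (⟪J B, C⟫ • J A - ⟪J A, C⟫ • J B + (2 * ⟪J B, A⟫) • J C)

theorem complexSpaceFormCurvature_unit_normal {J : V → V}
    (hJskew : ∀ x y, ⟪J x, y⟫ = -⟪x, J y⟫) (α β : ℝ) {A H : V} (hA : ‖A‖ = 1)
    (hH : ⟪H, A⟫ = 0) :
    complexSpaceFormCurvature J α β A H A = (-α) • H + (3 * β * ⟪J H, A⟫) • J A := by
  rw [complexSpaceFormCurvature, real_inner_self_eq_norm_sq, hA, one_pow, hH,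
    inner_apply_self_eq_zero_of_skew_s7 hJskew]
  module

theorem sum_complexSpaceFormCurvature_orthonormal {J : V →ₗ[ℝ] V}
    (hJskew : ∀ x y, ⟪J x, y⟫ = -⟪x, J y⟫) (α β : ℝ) {n : ℕ} {X : Fin n → V}
    (hX : Orthonormal ℝ X) {T : Submodule ℝ V} [T.HasOrthogonalProjection]
    (hspan : Submodule.span ℝ (Set.range X) = T) {H : V} (hH : H ∈ Tᗮ) :
    ∑ i, complexSpaceFormCurvature J α β (X i) H (X i)
      = (-(n : ℝ) * α) • H + (3 * β) • J (T.starProjection (J H)) := by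
  have hXT (i : Fin n) : X i ∈ T := hspan ▸ Submodule.subset_span ⟨i, rfl⟩
  have hHX (i : Fin n) : ⟪H, X i⟫ = 0 := Submodule.inner_left_of_mem_orthogonal (hXT i) hH
  simp_rw [complexSpaceFormCurvature_unit_normal hJskew α β (hX.norm_eq_one _) (hHX _),
    hX.starProjection_eq_sum hspan, Finset.sum_add_distrib, Finset.sum_const, map_sum,
    Finset.smul_sum, map_smul, smul_smul, real_inner_comm (X _) (J H)]
  simp only [Finset.card_univ, Fintype.card_fin, ← Nat.cast_smul_eq_nsmul ℝ, smul_smul]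
  ring_nf

end ComplexSpaceForm

theorem stmt_7_general
    {V : Type*} [NormedAddCommGroup V] [InnerProductSpace ℝ V] [FiniteDimensional ℝ V]
    (J : V →ₗ[ℝ] V)
    (hJskew : ∀ X Y : V, ⟪J X, Y⟫ = -⟪X, J Y⟫)
    (T : Submodule ℝ V)
    (j k l : V → V)
    (hj : ∀ X : V, j X = (Submodule.orthogonalProjectionOnto T (J X) : V))
    (hk : ∀ X : V, k X = (Submodule.orthogonalProjectionOnto Tᗮ (J X) : V))
    (hl : ∀ ξ : V, l ξ = (Submodule.orthogonalProjectionOnto T (J ξ) : V))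
    (n : ℕ) (X : Fin n → V)
    (hX : Orthonormal ℝ X)
    (hspan : Submodule.span ℝ (Set.range X) = T)
    (R₁ : V → V → V → V)
    (hR₁ : ∀ A B C : V, R₁ A B C = ⟪B, C⟫ • A - ⟪A, C⟫ • B)
    (R₂ : V → V → V → V)
    (hR₂ : ∀ A B C : V, R₂ A B C = ⟪J B, C⟫ • J A - ⟪J A, C⟫ • J B + (2 * ⟪J B, A⟫) • J C)
    (α β : ℝ) (R : V → V → V → V)
    (hR : ∀ A B C : V, R A B C = α • R₁ A B C + β • R₂ A B C)
    : ∀ H ∈ Tᗮ,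
      (∑ i, R (X i) H (X i)) = (-(n : ℝ) * α) • H + (3 * β) • (j (l H) + k (l H)) ∧
      (Submodule.orthogonalProjectionOnto T (∑ i, R (X i) H (X i)) : V) = (3 * β) • j (l H) ∧
      (Submodule.orthogonalProjectionOnto Tᗮ (∑ i, R (X i) H (X i)) : V)
        = (-(n : ℝ) * α) • H + (3 * β) • k (l H) := by
  intro H hH
  have hRcurv : R = complexSpaceFormCurvature J α β := by
    funext A B C
    rw [hR, hR₁, hR₂, complexSpaceFormCurvature]
  simp only [Submodule.coe_orthogonalProjectionOnto_apply] at hj hk hl ⊢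
  have hsum : ∑ i, R (X i) H (X i) = (-(n : ℝ) * α) • H + (3 * β) • (j (l H) + k (l H)) := by
    rw [hRcurv, sum_complexSpaceFormCurvature_orthonormal hJskew α β hX hspan hH, hj, hk, hl,
      Submodule.starProjection_add_starProjection_orthogonal]
  have hjT : j (l H) ∈ T := hj _ ▸ T.starProjection_apply_mem _
  have hkT : k (l H) ∈ Tᗮ := hk _ ▸ Tᗮ.starProjection_apply_mem _
  have hnormal : (-(n : ℝ) * α) • H + (3 * β) • k (l H) ∈ Tᗮ :=
    Tᗮ.add_mem (Tᗮ.smul_mem _ hH) (Tᗮ.smul_mem _ hkT)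
  have hsplit : ∑ i, R (X i) H (X i)
      = (3 * β) • j (l H) + ((-(n : ℝ) * α) • H + (3 * β) • k (l H)) := by
    rw [hsum]
    module
  refine ⟨hsum, ?_, ?_⟩
  · exact Submodule.eq_starProjection_of_mem_orthogonal' (T.smul_mem _ hjT) hnormal hsplit
  · exact Submodule.eq_starProjection_of_mem_orthogonal' hnormal
      (T.le_orthogonal_orthogonal (T.smul_mem _ hjT)) (hsplit.trans (add_comm _ _))

theorem stmt_7
    {V : Type*} [NormedAddCommGroup V] [InnerProductSpace ℝ V] [FiniteDimensional ℝ V]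
    (J : V →ₗ[ℝ] V)
    (hJ2 : ∀ X : V, J (J X) = -X)
    (hJskew : ∀ X Y : V, ⟪J X, Y⟫ = -⟪X, J Y⟫)
    (T : Submodule ℝ V)
    (j k l m : V → V)
    (hj : ∀ X : V, j X = (Submodule.orthogonalProjectionOnto T (J X) : V))
    (hk : ∀ X : V, k X = (Submodule.orthogonalProjectionOnto Tᗮ (J X) : V))
    (hl : ∀ ξ : V, l ξ = (Submodule.orthogonalProjectionOnto T (J ξ) : V))
    (hm : ∀ ξ : V, m ξ = (Submodule.orthogonalProjectionOnto Tᗮ (J ξ) : V))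
    (n : ℕ) (X : Fin n → V)
    (hX : Orthonormal ℝ X)
    (hspan : Submodule.span ℝ (Set.range X) = T)
    (R₁ : V → V → V → V)
    (hR₁ : ∀ A B C : V, R₁ A B C = ⟪B, C⟫ • A - ⟪A, C⟫ • B)
    (R₂ : V → V → V → V)
    (hR₂ : ∀ A B C : V, R₂ A B C = ⟪J B, C⟫ • J A - ⟪J A, C⟫ • J B + (2 * ⟪J B, A⟫) • J C)
    (α β : ℝ) (R : V → V → V → V)
    (hR : ∀ A B C : V, R A B C = α • R₁ A B C + β • R₂ A B C)
    : ∀ H ∈ Tᗮ,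
      (∑ i, R (X i) H (X i)) = (-(n : ℝ) * α) • H + (3 * β) • (j (l H) + k (l H)) ∧
      (Submodule.orthogonalProjectionOnto T (∑ i, R (X i) H (X i)) : V) = (3 * β) • j (l H) ∧
      (Submodule.orthogonalProjectionOnto Tᗮ (∑ i, R (X i) H (X i)) : V)
        = (-(n : ℝ) * α) • H + (3 * β) • k (l H) :=
  stmt_7_general J hJskew T j k l hj hk hl n X hX hspan R₁ hR₁ R₂ hR₂ α β R hR
end

section
/- For every H ∈ T⊥ one has ∑_{i=1}^{n} R₃⋆(Xᵢ, H)Xᵢ = 3φ(tH) = 3(P(tH) + N(tH)), where tH is the orthogonal projection of φH onto T, P(tH) the orthogonal projection of φ(tH) onto T, and N(tH) the orthogonal projection of φ(tH) onto T⊥. -/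
/-!
Skew-adjointness of `φ` gives `Ω(Xᵢ, Xᵢ) = 0`, so the `i`-th summand collapses to
`3 ⟪Xᵢ, φH⟫ φXᵢ`; by linearity the sum is `3 φ(∑ᵢ ⟪Xᵢ, φH⟫ Xᵢ)`, and that inner sum is the
orthogonal projection of `φH` onto `T = span {Xᵢ}`. The second identity is the splitting
`V = T ⊕ T⊥` applied to `φ(tH)`.
-/

open RealInnerProductSpace Submodule

theorem Orthonormal.starProjection_span_apply {𝕜 E ι : Type*} [RCLike 𝕜]
    [NormedAddCommGroup E] [InnerProductSpace 𝕜 E] [Fintype ι] {v : ι → E}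
    (hv : Orthonormal 𝕜 v) [(span 𝕜 (Set.range v)).HasOrthogonalProjection] (x : E) :
    (span 𝕜 (Set.range v)).starProjection x = ∑ i, inner 𝕜 (v i) x • v i := by
  have hb : Orthonormal 𝕜 (Module.Basis.span hv.linearIndependent) := by
    convert orthonormal_span hv using 1
    exact funext (Module.Basis.span_apply hv.linearIndependent)
  have hproj := (Module.Basis.span hv.linearIndependent).toOrthonormalBasis hb
    |>.orthogonalProjectionOnto_apply_eq_sum x
  simpa only [Module.Basis.coe_toOrthonormalBasis, Module.Basis.span_apply, starProjection_apply,
    coe_sum, coe_smul] using congrArg Subtype.val hproj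

section AlmostContact

variable {V : Type*} [NormedAddCommGroup V] [InnerProductSpace ℝ V] {φ : V →ₗ[ℝ] V}

theorem inner_self_map_eq_zero_of_skew (hφ : ∀ X Y : V, ⟪φ X, Y⟫ = -⟪X, φ Y⟫) (A : V) :
    ⟪A, φ A⟫ = 0 := by
  have := hφ A A
  rw [real_inner_comm] at this
  linarith

variable (φ) in
def almostContactR₃ (A B C : V) : V :=
  ⟪C, φ B⟫ • φ A - ⟪C, φ A⟫ • φ B + (2 * ⟪A, φ B⟫) • φ C

theorem almostContactR₃_self_right (hφ : ∀ X Y : V, ⟪φ X, Y⟫ = -⟪X, φ Y⟫) (A B : V) :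
    almostContactR₃ φ A B A = (3 * ⟪A, φ B⟫) • φ A := by
  rw [almostContactR₃, inner_self_map_eq_zero_of_skew hφ]
  module

theorem sum_almostContactR₃_self_right {ι : Type*} [Fintype ι]
    (hφ : ∀ X Y : V, ⟪φ X, Y⟫ = -⟪X, φ Y⟫) (X : ι → V) (B : V) :
    ∑ i, almostContactR₃ φ (X i) B (X i) = (3 : ℝ) • φ (∑ i, ⟪X i, φ B⟫ • X i) := by
  simp only [almostContactR₃_self_right hφ, map_sum, map_smul, Finset.smul_sum, mul_smul]

end AlmostContact

theorem stmt_14_general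
    {V : Type*} [NormedAddCommGroup V] [InnerProductSpace ℝ V] [FiniteDimensional ℝ V]
    (φ : V →ₗ[ℝ] V)
    (hφskew : ∀ X Y : V, ⟪φ X, Y⟫ = -⟪X, φ Y⟫)
    (T : Submodule ℝ V)
    (P N t : V → V)
    (hP : ∀ X : V, P X = (T.orthogonalProjectionOnto (φ X) : V))
    (hN : ∀ X : V, N X = (Tᗮ.orthogonalProjectionOnto (φ X) : V))
    (ht : ∀ ν : V, t ν = (T.orthogonalProjectionOnto (φ ν) : V))
    (n : ℕ) (X : Fin n → V)
    (hX : Orthonormal ℝ X)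
    (hspan : Submodule.span ℝ (Set.range X) = T)
    (Ω : V → V → ℝ) (hΩ : ∀ A B : V, Ω A B = ⟪A, φ B⟫)
    (R₃s : V → V → V → V)
    (hR₃s : ∀ A B C : V, R₃s A B C = Ω C B • φ A - Ω C A • φ B + (2 * Ω A B) • φ C)
    : ∀ H ∈ Tᗮ,
      (∑ i, R₃s (X i) H (X i)) = (3 : ℝ) • φ (t H) ∧
      (∑ i, R₃s (X i) H (X i)) = (3 : ℝ) • (P (t H) + N (t H)) := by
  intro H _
  subst hspan
  have hR : R₃s = almostContactR₃ φ := by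
    funext A B C
    simp only [hR₃s, hΩ, almostContactR₃]
  have hsum : ∑ i, R₃s (X i) H (X i) = (3 : ℝ) • φ (t H) := by
    rw [hR, sum_almostContactR₃_self_right hφskew, ht, ← starProjection_apply,
      hX.starProjection_span_apply]
  refine ⟨hsum, hsum.trans ?_⟩
  rw [hP, hN, ← starProjection_apply, ← starProjection_apply,
    starProjection_add_starProjection_orthogonal]

theorem stmt_14
    {V : Type*} [NormedAddCommGroup V] [InnerProductSpace ℝ V] [FiniteDimensional ℝ V]
    (ξ : V) (hξ : ‖ξ‖ = 1)
    (η : V → ℝ) (hη : ∀ X : V, η X = ⟪X, ξ⟫)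
    (φ : V →ₗ[ℝ] V)
    (hφ2 : ∀ X : V, φ (φ X) = -X + η X • ξ)
    (hφskew : ∀ X Y : V, ⟪φ X, Y⟫ = -⟪X, φ Y⟫)
    (T : Submodule ℝ V)
    (P N t s : V → V)
    (hP : ∀ X : V, P X = (T.orthogonalProjectionOnto (φ X) : V))
    (hN : ∀ X : V, N X = (Tᗮ.orthogonalProjectionOnto (φ X) : V))
    (ht : ∀ ν : V, t ν = (T.orthogonalProjectionOnto (φ ν) : V))
    (hs : ∀ ν : V, s ν = (Tᗮ.orthogonalProjectionOnto (φ ν) : V))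
    (n : ℕ) (X : Fin n → V)
    (hX : Orthonormal ℝ X)
    (hspan : Submodule.span ℝ (Set.range X) = T)
    (Ω : V → V → ℝ) (hΩ : ∀ A B : V, Ω A B = ⟪A, φ B⟫)
    (R₃s : V → V → V → V)
    (hR₃s : ∀ A B C : V, R₃s A B C = Ω C B • φ A - Ω C A • φ B + (2 * Ω A B) • φ C)
    : ∀ H ∈ Tᗮ,
      (∑ i, R₃s (X i) H (X i)) = (3 : ℝ) • φ (t H) ∧
      (∑ i, R₃s (X i) H (X i)) = (3 : ℝ) • (P (t H) + N (t H)) :=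
  stmt_14_general φ hφskew T P N t hP hN ht n X hX hspan Ω hΩ R₃s hR₃s
end
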